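/- Let α and β be limit ordinals such that for every ordinal γ, if ω^γ divides α then ω^γ divides β (divisibility of ordinals: a ∣ b iff b = a * c for some ordinal c, with ordinal multiplication). Then α ♯ β = sup { α' ♯ β | α' < α }. -/

import Mathlib

open Ordinal

universe u

/-- Natural addition on ordinals (Hessenberg sum), as `Ordinal.nadd` was defined in Mathlib
(December 2024); it has since been removed from Mathlib. -/
noncomputable def Ordinal.nadd : Ordinal.{u} → Ordinal.{u} → Ordinal.{u}
  | a, b =>
    max (blsub.{u, u} a fun a' _ => Ordinal.nadd a' b) (blsub.{u, u} b fun b' _ => Ordinal.nadd a b')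
termination_by o₁ o₂ => (o₁, o₂)

infixl:65 " ♯ " => Ordinal.nadd

open Ordinal Order

namespace Ordinal

theorem nadd_def (a b : Ordinal.{u}) :
    a ♯ b = max (blsub.{u, u} a fun a' _ => a' ♯ b) (blsub.{u, u} b fun b' _ => a ♯ b') := by
  rw [Ordinal.nadd]

theorem lt_nadd_iff {a b c : Ordinal.{u}} :
    a < b ♯ c ↔ (∃ b' < b, a ≤ b' ♯ c) ∨ ∃ c' < c, a ≤ b ♯ c' := by
  rw [nadd_def]; simp [lt_blsub_iff]

theorem nadd_le_iff {a b c : Ordinal.{u}} :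
    b ♯ c ≤ a ↔ (∀ b' < b, b' ♯ c < a) ∧ ∀ c' < c, b ♯ c' < a := by
  rw [nadd_def]; simp [blsub_le_iff]

theorem nadd_lt_nadd_left {b c : Ordinal.{u}} (h : b < c) (a : Ordinal.{u}) : a ♯ b < a ♯ c :=
  lt_nadd_iff.2 (Or.inr ⟨b, h, le_rfl⟩)

theorem nadd_lt_nadd_right {b c : Ordinal.{u}} (h : b < c) (a : Ordinal.{u}) : b ♯ a < c ♯ a :=
  lt_nadd_iff.2 (Or.inl ⟨b, h, le_rfl⟩)

theorem nadd_le_nadd_left {b c : Ordinal.{u}} (h : b ≤ c) (a : Ordinal.{u}) : a ♯ b ≤ a ♯ c := by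
  rcases lt_or_eq_of_le h with (h | rfl)
  · exact (nadd_lt_nadd_left h a).le
  · exact le_rfl

theorem nadd_le_nadd_right {b c : Ordinal.{u}} (h : b ≤ c) (a : Ordinal.{u}) : b ♯ a ≤ c ♯ a := by
  rcases lt_or_eq_of_le h with (h | rfl)
  · exact (nadd_lt_nadd_right h a).le
  · exact le_rfl

theorem nadd_le_nadd {a b c d : Ordinal.{u}} (h₁ : a ≤ b) (h₂ : c ≤ d) : a ♯ c ≤ b ♯ d :=
  (nadd_le_nadd_left h₂ a).trans (nadd_le_nadd_right h₁ d)

theorem nadd_comm (a b : Ordinal.{u}) : a ♯ b = b ♯ a := by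
  rw [nadd_def, nadd_def, max_comm]
  congr 1
  · congr 1; funext x hx; exact nadd_comm a x
  · congr 1; funext x hx; exact nadd_comm x b
termination_by (a, b)

theorem nadd_assoc (a b c : Ordinal.{u}) : a ♯ b ♯ c = a ♯ (b ♯ c) := by
  apply le_antisymm
  · rw [nadd_le_iff]
    refine ⟨fun x hx => ?_, fun c' hc' => ?_⟩
    · rcases lt_nadd_iff.1 hx with ⟨a', ha', hx'⟩ | ⟨b', hb', hx'⟩
      · calc x ♯ c ≤ a' ♯ b ♯ c := nadd_le_nadd_right hx' c
          _ = a' ♯ (b ♯ c) := nadd_assoc a' b c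
          _ < a ♯ (b ♯ c) := nadd_lt_nadd_right ha' _
      · calc x ♯ c ≤ a ♯ b' ♯ c := nadd_le_nadd_right hx' c
          _ = a ♯ (b' ♯ c) := nadd_assoc a b' c
          _ < a ♯ (b ♯ c) := nadd_lt_nadd_left (nadd_lt_nadd_right hb' c) _
    · calc a ♯ b ♯ c' = a ♯ (b ♯ c') := nadd_assoc a b c'
        _ < a ♯ (b ♯ c) := nadd_lt_nadd_left (nadd_lt_nadd_left hc' b) _
  · rw [nadd_le_iff]
    refine ⟨fun a' ha' => ?_, fun x hx => ?_⟩
    · calc a' ♯ (b ♯ c) = a' ♯ b ♯ c := (nadd_assoc a' b c).symm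
        _ < a ♯ b ♯ c := nadd_lt_nadd_right (nadd_lt_nadd_right ha' b) _
    · rcases lt_nadd_iff.1 hx with ⟨b', hb', hx'⟩ | ⟨c', hc', hx'⟩
      · calc a ♯ x ≤ a ♯ (b' ♯ c) := nadd_le_nadd_left hx' a
          _ = a ♯ b' ♯ c := (nadd_assoc a b' c).symm
          _ < a ♯ b ♯ c := nadd_lt_nadd_right (nadd_lt_nadd_left hb' a) _
      · calc a ♯ x ≤ a ♯ (b ♯ c') := nadd_le_nadd_left hx' a
          _ = a ♯ b ♯ c' := (nadd_assoc a b c').symm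
          _ < a ♯ b ♯ c := nadd_lt_nadd_left hc' _
termination_by (a, b, c)

theorem nadd_zero (a : Ordinal.{u}) : a ♯ 0 = a := by
  induction a using Ordinal.induction with | h a IH => ?_
  rw [nadd_def, blsub_zero, max_eq_left (by simp)]
  convert blsub_id a using 2
  funext x hx
  rw [IH x hx]

theorem zero_nadd (a : Ordinal.{u}) : 0 ♯ a = a := by
  rw [nadd_comm, nadd_zero]

theorem nadd_one (a : Ordinal.{u}) : a ♯ 1 = succ a := by
  induction a using Ordinal.induction with | h a IH => ?_
  rw [nadd_def, blsub_one, nadd_zero, max_eq_right_iff, blsub_le_iff]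
  intro i hi
  rwa [IH i hi, succ_lt_succ_iff]

theorem nadd_succ (a b : Ordinal.{u}) : a ♯ succ b = succ (a ♯ b) := by
  rw [← nadd_one (a ♯ b), nadd_assoc, nadd_one]

theorem succ_nadd (a b : Ordinal.{u}) : succ a ♯ b = succ (a ♯ b) := by
  rw [nadd_comm, nadd_succ, nadd_comm]

theorem nadd_nat (a : Ordinal.{u}) (n : ℕ) : a ♯ n = a + n := by
  induction n with
  | zero => simp [nadd_zero]
  | succ n hn => rw [Nat.cast_succ, add_one_eq_succ, nadd_succ, add_succ, hn]

theorem add_le_nadd (a b : Ordinal.{u}) : a + b ≤ a ♯ b := by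
  induction b using Ordinal.induction with | h b IH => ?_
  rcases zero_or_succ_or_isSuccLimit b with (rfl | ⟨c, rfl⟩ | hb)
  · simp [nadd_zero]
  · rw [add_succ, nadd_succ, succ_le_succ_iff]
    exact IH c (lt_succ c)
  · rw [add_le_iff_of_isSuccLimit hb]
    exact fun i hi => (IH i hi).trans (nadd_lt_nadd_left hi a).le

theorem nadd_left_comm (a b c : Ordinal.{u}) : a ♯ (b ♯ c) = b ♯ (a ♯ c) := by
  rw [← nadd_assoc, nadd_comm a, nadd_assoc]

theorem nadd_right_comm (a b c : Ordinal.{u}) : a ♯ b ♯ c = a ♯ c ♯ b := by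
  rw [nadd_assoc, nadd_comm b, ← nadd_assoc]

end Ordinal

/-- `(x ♯ y) + d ≤ (x + d) ♯ y`. -/
private theorem nadd_add_le (x y d : Ordinal) : (x ♯ y) + d ≤ (x + d) ♯ y := by
  induction d using Ordinal.limitRecOn with
  | zero => simp
  | add_one d ih =>
    rw [add_one_eq_succ]
    calc (x ♯ y) + succ d = succ ((x ♯ y) + d) := add_succ _ _
      _ ≤ succ ((x + d) ♯ y) := succ_le_succ ih
      _ = succ (x + d) ♯ y := (succ_nadd _ _).symm
      _ = (x + succ d) ♯ y := by rw [add_succ]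
  | limit d hd ih =>
    rw [(isNormal_add_right (x ♯ y)).le_iff_forall_le hd]
    intro d' hd'
    exact (ih d' hd').trans (nadd_le_nadd_right (add_le_add_right hd'.le x) y)

/-- Given closure of `ω ^ γ` under `♯`, absorption: `(ω^γ * M) ♯ ρ ≤ ω^γ * M + ρ`. -/
private theorem aux_R {γ : Ordinal}
    (hcl : ∀ a b, a < ω ^ γ → b < ω ^ γ → a ♯ b < ω ^ γ) :
    ∀ M ρ, ρ < ω ^ γ → (ω ^ γ * M) ♯ ρ ≤ ω ^ γ * M + ρ := by
  have hω : (ω : Ordinal) ^ γ ≠ 0 := opow_ne_zero γ omega0_ne_zero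
  intro M
  induction M using Ordinal.induction with
  | h M ihM =>
  intro ρ
  induction ρ using Ordinal.induction with
  | h ρ ihρ =>
  intro hρ
  rw [nadd_le_iff]
  constructor
  · intro x hx
    have hd : x / ω ^ γ < M := (div_lt hω).2 hx
    have hm : x % ω ^ γ < ω ^ γ := mod_lt x hω
    calc x ♯ ρ = (ω ^ γ * (x / ω ^ γ) + x % ω ^ γ) ♯ ρ := by rw [div_add_mod]
      _ ≤ ((ω ^ γ * (x / ω ^ γ)) ♯ (x % ω ^ γ)) ♯ ρ := nadd_le_nadd_right (add_le_nadd _ _) ρ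
      _ = (ω ^ γ * (x / ω ^ γ)) ♯ ((x % ω ^ γ) ♯ ρ) := nadd_assoc _ _ _
      _ ≤ ω ^ γ * (x / ω ^ γ) + ((x % ω ^ γ) ♯ ρ) := ihM _ hd _ (hcl _ _ hm hρ)
      _ < ω ^ γ * (x / ω ^ γ) + ω ^ γ := add_lt_add_right (hcl _ _ hm hρ) _
      _ = ω ^ γ * succ (x / ω ^ γ) := (mul_succ _ _).symm
      _ ≤ ω ^ γ * M := mul_le_mul_right (succ_le_of_lt hd) _
      _ ≤ ω ^ γ * M + ρ := le_self_add
  · intro ρ' hρ'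
    calc (ω ^ γ * M) ♯ ρ' ≤ ω ^ γ * M + ρ' := ihρ ρ' hρ' (hρ'.trans hρ)
      _ < ω ^ γ * M + ρ := add_lt_add_right hρ' _

/-- Given closure of `ω ^ γ` under `♯`: `(ω^γ * m) ♯ (ω^γ * n) ≤ ω^γ * (m ♯ n)`. -/
private theorem aux_L2' {γ : Ordinal}
    (hcl : ∀ a b, a < ω ^ γ → b < ω ^ γ → a ♯ b < ω ^ γ) :
    ∀ m n, (ω ^ γ * m) ♯ (ω ^ γ * n) ≤ ω ^ γ * (m ♯ n) := by
  have hω : (ω : Ordinal) ^ γ ≠ 0 := opow_ne_zero γ omega0_ne_zero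
  intro m
  induction m using Ordinal.induction with
  | h m ihm =>
  intro n
  induction n using Ordinal.induction with
  | h n ihn =>
  rw [nadd_le_iff]
  constructor
  · intro x hx
    have hd : x / ω ^ γ < m := (div_lt hω).2 hx
    have hr : x % ω ^ γ < ω ^ γ := mod_lt x hω
    calc x ♯ (ω ^ γ * n) = (ω ^ γ * (x / ω ^ γ) + x % ω ^ γ) ♯ (ω ^ γ * n) := by
          rw [div_add_mod]
      _ ≤ ((ω ^ γ * (x / ω ^ γ)) ♯ (x % ω ^ γ)) ♯ (ω ^ γ * n) := nadd_le_nadd_right (add_le_nadd _ _) _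
      _ = ((ω ^ γ * (x / ω ^ γ)) ♯ (ω ^ γ * n)) ♯ (x % ω ^ γ) := nadd_right_comm _ _ _
      _ ≤ (ω ^ γ * ((x / ω ^ γ) ♯ n)) ♯ (x % ω ^ γ) := nadd_le_nadd_right (ihm _ hd n) _
      _ ≤ ω ^ γ * ((x / ω ^ γ) ♯ n) + x % ω ^ γ := aux_R hcl _ _ hr
      _ < ω ^ γ * ((x / ω ^ γ) ♯ n) + ω ^ γ := add_lt_add_right hr _
      _ = ω ^ γ * succ ((x / ω ^ γ) ♯ n) := (mul_succ _ _).symm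
      _ ≤ ω ^ γ * (m ♯ n) := mul_le_mul_right (succ_le_of_lt (nadd_lt_nadd_right hd n)) _
  · intro y hy
    have hd : y / ω ^ γ < n := (div_lt hω).2 hy
    have hr : y % ω ^ γ < ω ^ γ := mod_lt y hω
    calc (ω ^ γ * m) ♯ y = (ω ^ γ * m) ♯ (ω ^ γ * (y / ω ^ γ) + y % ω ^ γ) := by
          rw [div_add_mod]
      _ ≤ (ω ^ γ * m) ♯ ((ω ^ γ * (y / ω ^ γ)) ♯ (y % ω ^ γ)) := nadd_le_nadd_left (add_le_nadd _ _) _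
      _ = ((ω ^ γ * m) ♯ (ω ^ γ * (y / ω ^ γ))) ♯ (y % ω ^ γ) := (nadd_assoc _ _ _).symm
      _ ≤ (ω ^ γ * (m ♯ (y / ω ^ γ))) ♯ (y % ω ^ γ) := nadd_le_nadd_right (ihn _ hd) _
      _ ≤ ω ^ γ * (m ♯ (y / ω ^ γ)) + y % ω ^ γ := aux_R hcl _ _ hr
      _ < ω ^ γ * (m ♯ (y / ω ^ γ)) + ω ^ γ := add_lt_add_right hr _
      _ = ω ^ γ * succ (m ♯ (y / ω ^ γ)) := (mul_succ _ _).symm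
      _ ≤ ω ^ γ * (m ♯ n) := mul_le_mul_right (succ_le_of_lt (nadd_lt_nadd_left hd m)) _

/-- `ω ^ e` is closed under natural addition. -/
private theorem nadd_lt_omega0_opow : ∀ (e a b : Ordinal),
    a < ω ^ e → b < ω ^ e → a ♯ b < ω ^ e := by
  intro e
  induction e using Ordinal.induction with
  | h e ihe =>
  intro a b ha hb
  rcases eq_or_ne a 0 with rfl | ha0
  · rwa [zero_nadd]
  rcases eq_or_ne b 0 with rfl | hb0
  · rwa [nadd_zero]
  set γ := log ω a ⊔ log ω b with hγ
  have hγe : γ < e :=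
    max_lt ((lt_opow_iff_log_lt one_lt_omega0 ha0).1 ha)
      ((lt_opow_iff_log_lt one_lt_omega0 hb0).1 hb)
  have hω : (ω : Ordinal) ^ γ ≠ 0 := opow_ne_zero γ omega0_ne_zero
  have hcl : ∀ x y, x < ω ^ γ → y < ω ^ γ → x ♯ y < ω ^ γ := ihe γ hγe
  have ha' : a < ω ^ γ * ω := by
    rw [← opow_succ]
    exact (lt_opow_succ_log_self one_lt_omega0 a).trans_le
      (opow_le_opow_right omega0_pos (succ_le_succ (le_max_left _ _)))
  have hb' : b < ω ^ γ * ω := by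
    rw [← opow_succ]
    exact (lt_opow_succ_log_self one_lt_omega0 b).trans_le
      (opow_le_opow_right omega0_pos (succ_le_succ (le_max_right _ _)))
  have hqa : a / ω ^ γ < ω := (div_lt hω).2 ha'
  have hqb : b / ω ^ γ < ω := (div_lt hω).2 hb'
  have hra : a % ω ^ γ < ω ^ γ := mod_lt a hω
  have hrb : b % ω ^ γ < ω ^ γ := mod_lt b hω
  have hq : (a / ω ^ γ) ♯ (b / ω ^ γ) < ω := by
    obtain ⟨nb, hnb⟩ := lt_omega0.1 hqb
    rw [hnb, nadd_nat]
    exact principal_add_omega0 hqa (nat_lt_omega0 nb)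
  calc a ♯ b = (ω ^ γ * (a / ω ^ γ) + a % ω ^ γ) ♯ (ω ^ γ * (b / ω ^ γ) + b % ω ^ γ) := by
        rw [div_add_mod, div_add_mod]
    _ ≤ ((ω ^ γ * (a / ω ^ γ)) ♯ (a % ω ^ γ)) ♯ ((ω ^ γ * (b / ω ^ γ)) ♯ (b % ω ^ γ)) :=
        nadd_le_nadd (add_le_nadd _ _) (add_le_nadd _ _)
    _ = ((ω ^ γ * (a / ω ^ γ)) ♯ (ω ^ γ * (b / ω ^ γ))) ♯ ((a % ω ^ γ) ♯ (b % ω ^ γ)) := by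
        rw [nadd_assoc, nadd_left_comm (a % ω ^ γ), ← nadd_assoc]
    _ ≤ (ω ^ γ * ((a / ω ^ γ) ♯ (b / ω ^ γ))) ♯ ((a % ω ^ γ) ♯ (b % ω ^ γ)) :=
        nadd_le_nadd_right (aux_L2' hcl _ _) _
    _ ≤ ω ^ γ * ((a / ω ^ γ) ♯ (b / ω ^ γ)) + ((a % ω ^ γ) ♯ (b % ω ^ γ)) :=
        aux_R hcl _ _ (hcl _ _ hra hrb)
    _ < ω ^ γ * ((a / ω ^ γ) ♯ (b / ω ^ γ)) + ω ^ γ := add_lt_add_right (hcl _ _ hra hrb) _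
    _ = ω ^ γ * succ ((a / ω ^ γ) ♯ (b / ω ^ γ)) := (mul_succ _ _).symm
    _ ≤ ω ^ γ * ω := mul_le_mul_right (succ_le_of_lt hq) _
    _ = ω ^ succ γ := (opow_succ _ _).symm
    _ ≤ ω ^ e := opow_le_opow_right omega0_pos (succ_le_of_lt hγe)

/-- `a * (m ♯ n) ≤ a * m ♯ a * n`. -/
private theorem mul_nadd_le (a : Ordinal) : ∀ m n, a * (m ♯ n) ≤ (a * m) ♯ (a * n) := by
  rcases eq_or_ne a 0 with rfl | ha
  · simp
  intro m
  induction m using Ordinal.induction with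
  | h m ihm =>
  intro n
  induction n using Ordinal.induction with
  | h n ihn =>
  apply le_of_forall_lt
  intro c hc
  have hs : c / a < m ♯ n := (div_lt ha).2 hc
  have hc' : c < a * succ (c / a) := by
    rw [mul_succ]
    conv_lhs => rw [← div_add_mod c a]
    exact add_lt_add_right (mod_lt c ha) _
  rcases lt_nadd_iff.1 hs with ⟨m', hm', hsm⟩ | ⟨n', hn', hsn⟩
  · calc c < a * succ (c / a) := hc'
      _ ≤ a * succ (m' ♯ n) := mul_le_mul_right (succ_le_succ hsm) _
      _ = a * (m' ♯ n) + a := mul_succ _ _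
      _ ≤ ((a * m') ♯ (a * n)) + a := add_le_add_left (ihm m' hm' n) a
      _ ≤ (a * m' + a) ♯ (a * n) := nadd_add_le _ _ _
      _ = (a * succ m') ♯ (a * n) := by rw [mul_succ]
      _ ≤ (a * m) ♯ (a * n) := nadd_le_nadd_right (mul_le_mul_right (succ_le_of_lt hm') a) _
  · calc c < a * succ (c / a) := hc'
      _ ≤ a * succ (m ♯ n') := mul_le_mul_right (succ_le_succ hsn) _
      _ = a * (m ♯ n') + a := mul_succ _ _
      _ ≤ ((a * n') ♯ (a * m)) + a := by
          rw [nadd_comm (a * n') (a * m)]; exact add_le_add_left (ihn n' hn') a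
      _ ≤ (a * n' + a) ♯ (a * m) := nadd_add_le _ _ _
      _ = (a * succ n') ♯ (a * m) := by rw [mul_succ]
      _ ≤ (a * n) ♯ (a * m) := nadd_le_nadd_right (mul_le_mul_right (succ_le_of_lt hn') a) _
      _ = (a * m) ♯ (a * n) := nadd_comm _ _

/-- Every nonzero ordinal can be written as `ω^e * a₁ + ω^e`. -/
private theorem exists_omega0_opow_mul_add (α : Ordinal) (h0 : α ≠ 0) :
    ∃ e a₁ : Ordinal, α = ω ^ e * a₁ + ω ^ e := by
  set T := {γ : Ordinal | ω ^ γ ∣ α} with hT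
  have hT0 : (0 : Ordinal) ∈ T := by simp [hT]
  have hbdd : BddAbove T := ⟨α, fun γ hγ =>
    (right_le_opow γ one_lt_omega0).trans (le_of_dvd h0 hγ)⟩
  set e := sSup T with he
  have hωe : (ω : Ordinal) ^ e ≠ 0 := opow_ne_zero e omega0_ne_zero
  have hdvd : ω ^ e ∣ α := by
    rw [dvd_iff_mod_eq_zero]
    by_contra hr
    have hrlt : α % ω ^ e < ω ^ e := mod_lt α hωe
    have hlog : log ω (α % ω ^ e) < e := (lt_opow_iff_log_lt one_lt_omega0 hr).1 hrlt
    obtain ⟨t, htT, hlt⟩ := exists_lt_of_lt_csSup ⟨0, hT0⟩ hlog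
    have hte : t ≤ e := le_csSup hbdd htT
    have h1 : α % ω ^ e < ω ^ t :=
      (lt_opow_succ_log_self one_lt_omega0 _).trans_le
        (opow_le_opow_right omega0_pos (succ_le_of_lt hlt))
    have hdvd1 : ω ^ t ∣ ω ^ e * (α / ω ^ e) :=
      dvd_mul_of_dvd_left (opow_dvd_opow ω hte) _
    have hdvd2 : ω ^ t ∣ α % ω ^ e := by
      have := (dvd_add_iff hdvd1).1 (by rw [div_add_mod]; exact htT)
      exact this
    exact absurd ((le_of_dvd hr hdvd2).trans_lt h1) (lt_irrefl _)
  obtain ⟨a, ha⟩ := hdvd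
  have hωa : ¬ (ω : Ordinal) ∣ a := by
    rintro ⟨c, rfl⟩
    have hst : succ e ∈ T := ⟨c, by rw [ha, opow_succ, mul_assoc]⟩
    exact (lt_succ e).not_ge (le_csSup hbdd hst)
  have hmod : a % ω ≠ 0 := fun h => hωa (dvd_of_mod_eq_zero h)
  obtain ⟨k, hk⟩ := lt_omega0.1 (mod_lt a omega0_ne_zero)
  obtain ⟨k', rfl⟩ : ∃ k', k = k' + 1 := by
    cases k with
    | zero => exact absurd (by rw [hk]; rfl) hmod
    | succ k' => exact ⟨k', rfl⟩
  refine ⟨e, ω * (a / ω) + (k' : Ordinal), ?_⟩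
  have ha' : a = succ (ω * (a / ω) + (k' : Ordinal)) := by
    conv_lhs => rw [← div_add_mod a ω]
    rw [hk]
    push_cast
    rw [← add_assoc, add_one_eq_succ]
  rw [ha]
  conv_lhs => rw [ha']
  rw [mul_succ]

/-- If `α` and `β` are limit ordinals and every power of `ω` dividing `α` also divides `β`
(i.e. the least exponent in the Cantor normal form of `α` is at most the least exponent in
that of `β`), then `α ♯ β` is the supremum of the `α' ♯ β` for `α' < α`. -/
theorem nadd_eq_sup_of_limit
    (α β : Ordinal) (hα : Order.IsSuccLimit α) (hβ : Order.IsSuccLimit β)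
    (hdvd : ∀ γ : Ordinal, ω ^ γ ∣ α → ω ^ γ ∣ β) :
    α ♯ β = sSup {o : Ordinal | ∃ α' < α, o = α' ♯ β} := by
  set S := {o : Ordinal | ∃ α' < α, o = α' ♯ β} with hS
  have hne : S.Nonempty := ⟨0 ♯ β, 0, hα.pos, rfl⟩
  have hbdd : BddAbove S := ⟨α ♯ β, by
    rintro o ⟨a', ha', rfl⟩
    exact (nadd_le_nadd_right ha'.le β)⟩
  have key : ∀ α'' < α, α'' ♯ β < sSup S := fun α'' h =>
    (nadd_lt_nadd_right (lt_succ α'') β).trans_le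
      (le_csSup hbdd ⟨succ α'', hα.succ_lt h, rfl⟩)
  apply le_antisymm
  · rw [nadd_le_iff]
    refine ⟨fun α' h => key α' h, fun β' hβ' => ?_⟩
    obtain ⟨e, a₁, hdec⟩ := exists_omega0_opow_mul_add α hα.pos.ne'
    have hω : (ω : Ordinal) ^ e ≠ 0 := opow_ne_zero e omega0_ne_zero
    have hdvdα : ω ^ e ∣ α := ⟨succ a₁, by rw [hdec, mul_succ]⟩
    obtain ⟨b, hb⟩ := hdvd e hdvdα
    have hρ : β' % ω ^ e < ω ^ e := mod_lt β' hω
    have hb' : β' / ω ^ e < b := (div_lt hω).2 (hb ▸ hβ')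
    have hα' : ω ^ e * a₁ + β' % ω ^ e < α := by
      rw [hdec]; exact add_lt_add_right hρ _
    have hcl := nadd_lt_omega0_opow e
    have chain : α ♯ β' ≤ (ω ^ e * a₁ + β' % ω ^ e) ♯ β := by
      calc α ♯ β' = (ω ^ e * succ a₁) ♯ (ω ^ e * (β' / ω ^ e) + β' % ω ^ e) := by
            rw [hdec, mul_succ, div_add_mod]
        _ ≤ (ω ^ e * succ a₁) ♯ ((ω ^ e * (β' / ω ^ e)) ♯ (β' % ω ^ e)) :=
            nadd_le_nadd_left (add_le_nadd _ _) _
        _ = ((ω ^ e * succ a₁) ♯ (ω ^ e * (β' / ω ^ e))) ♯ (β' % ω ^ e) :=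
            (nadd_assoc _ _ _).symm
        _ ≤ (ω ^ e * (succ a₁ ♯ (β' / ω ^ e))) ♯ (β' % ω ^ e) :=
            nadd_le_nadd_right (aux_L2' hcl _ _) _
        _ ≤ ω ^ e * (succ a₁ ♯ (β' / ω ^ e)) + β' % ω ^ e := aux_R hcl _ _ hρ
        _ ≤ ω ^ e * (a₁ ♯ b) + β' % ω ^ e := by
            refine add_le_add_left (mul_le_mul_right ?_ _) _
            rw [succ_nadd]
            exact succ_le_of_lt (nadd_lt_nadd_left hb' a₁)
        _ ≤ ((ω ^ e * a₁) ♯ (ω ^ e * b)) + β' % ω ^ e :=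
            add_le_add_left (mul_nadd_le _ _ _) _
        _ ≤ (ω ^ e * a₁ + β' % ω ^ e) ♯ (ω ^ e * b) := nadd_add_le _ _ _
        _ = (ω ^ e * a₁ + β' % ω ^ e) ♯ β := by rw [hb]
    exact chain.trans_lt (key _ hα')
  · exact csSup_le hne (by rintro o ⟨a', ha', rfl⟩; exact nadd_le_nadd_right ha'.le β)
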